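/- Let n ≥ 2, m ≥ 3, and let P be an m-th order, n-dimensional stochastic tensor on S = {1,…,n}. Then there do not exist states i, j ∈ S such that i and j communicate (i ↔ j), i is recurrent, and j is fully transient. In particular, an equivalence class of the communication relation cannot contain both a recurrent state and a fully transient state. -/

import Mathlib

open Finset

/-- An `m`-th order, `n`-dimensional tensor with `m = r + 2`: the entry
`p_{i₁ i₂ … i_m}` is written `P i₁ t`, where `t = (i₂, …, i_m)` is the tail of
`m - 1 = r + 1` indices. -/
abbrev HOTensor (n r : ℕ) := Fin n → (Fin (r + 1) → Fin n) → ℝ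

/-- `P` is a stochastic tensor. -/
def IsStochasticT {n r : ℕ} (P : HOTensor n r) : Prop :=
  (∀ i t, 0 ≤ P i t ∧ P i t ≤ 1) ∧ ∀ t, ∑ i : Fin n, P i t = 1

/-- The product `A ⊠ B`:
`(A ⊠ B)_{i₁ i₂ … i_m} = Σ_j a_{i₁ j i₂ … i_{m-1}} b_{j i₂ … i_m}`. -/
def tmul {n r : ℕ} (A B : HOTensor n r) : HOTensor n r :=
  fun i t => ∑ j : Fin n, A i (Fin.cons j (Fin.init t)) * B j t

/-- Tensor powers: `tpow P k` is `P^k`, with entries the `k`-step transition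
probabilities `p^{(k)}_{i₁ … i_m}`; `P^0` is the identity tensor. -/
def tpow {n r : ℕ} (P : HOTensor n r) : ℕ → HOTensor n r
  | 0 => fun i t => if i = t 0 then 1 else 0
  | k + 1 => tmul (tpow P k) P

/-- `fpp P k` is the `(k+1)`-step first passage probability tensor `F^{[k+1]}`:
`f^{[1]} = p`, and `f^{[k+1]}_{i₁ i₂ … i_m} = Σ_{j ≠ i₁} f^{[k]}_{i₁ j i₂ … i_{m-1}} p_{j i₂ … i_m}`. -/
def fpp {n r : ℕ} (P : HOTensor n r) : ℕ → HOTensor n r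
  | 0 => P
  | k + 1 => fun i t =>
      ∑ j ∈ Finset.univ.filter (fun j => j ≠ i), fpp P k i (Fin.cons j (Fin.init t)) * P j t

/-- The ever-reaching probability `f_{i₁ i₂ … i_m} = Σ_{k=1}^∞ f^{[k]}_{i₁ i₂ … i_m}`. -/
noncomputable def everReach {n r : ℕ} (P : HOTensor n r) : HOTensor n r :=
  fun i t => ∑' k : ℕ, fpp P k i t

/-- State `j` is reachable from state `i` (`i → j`): for every choice of
`i₃, …, i_m` there is `k ≥ 0` with `p^{(k)}_{j i i₃ … i_m} > 0`. -/
def Reach {n r : ℕ} (P : HOTensor n r) (i j : Fin n) : Prop :=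
  ∀ u : Fin r → Fin n, ∃ k : ℕ, 0 < tpow P k j (Fin.cons i u)

/-- States `i` and `j` communicate (`i ↔ j`). -/
def Comm {n r : ℕ} (P : HOTensor n r) (i j : Fin n) : Prop :=
  Reach P i j ∧ Reach P j i

/-- State `i` is recurrent: `f_{i i i₃ … i_m} = 1` for all `i₃, …, i_m`. -/
def RecurrentState {n r : ℕ} (P : HOTensor n r) (i : Fin n) : Prop :=
  ∀ u : Fin r → Fin n, everReach P i (Fin.cons i u) = 1

/-- State `i` is fully transient: `f_{i i i₃ … i_m} < 1` for all `i₃, …, i_m`. -/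
def FullyTransientState {n r : ℕ} (P : HOTensor n r) (i : Fin n) : Prop :=
  ∀ u : Fin r → Fin n, everReach P i (Fin.cons i u) < 1

/-- `P` is ergodic: for all indices there is `k ≥ 1` with `p^{(k)}_{i₁ … i_m} > 0`. -/
def ErgodicT {n r : ℕ} (P : HOTensor n r) : Prop :=
  ∀ (i : Fin n) (t : Fin (r + 1) → Fin n), ∃ k : ℕ, 1 ≤ k ∧ 0 < tpow P k i t

/-- `P` is regular: some power `P^k`, `k ≥ 1`, has all entries positive. -/
def RegularT {n r : ℕ} (P : HOTensor n r) : Prop :=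
  ∃ k : ℕ, 1 ≤ k ∧ ∀ (i : Fin n) (t : Fin (r + 1) → Fin n), 0 < tpow P k i t

/-- The reduced transition matrix `Q` of `P`: rows and columns are indexed by
`(m-1)`-tuples; the entry in row `(i₁, …, i_{m-1})` and column `(j₁, …, j_{m-1})`
is `p_{i₁ i₂ … i_{m-1} j_{m-1}}` if `j_ℓ = i_{ℓ+1}` for `ℓ = 1, …, m-2`, else `0`. -/
def reducedT {n r : ℕ} (P : HOTensor n r) :
    Matrix (Fin (r + 1) → Fin n) (Fin (r + 1) → Fin n) ℝ :=
  fun u v =>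
    if ∀ ℓ : Fin r, v ℓ.castSucc = u ℓ.succ then
      P (u 0) (Fin.snoc (Fin.tail u) (v (Fin.last r)))
    else 0

/-!
The tails `s = (i₂, …, i_m)` carry a finite Markov chain: from `s` it moves to
`shift j s = (j, i₂, …, i_{m-1})` with probability `P j s`, and `everReach P i s` is the
probability that it ever moves into a tail beginning with `i`. So `h = everReach P i` is a
weighted average of its successor values, `h s = Σ_j P j s * (if j = i then 1 else h (shift j s))`.

Let `R` be the set of tails reachable from `(i, …, i)`. Recurrence of `i` and the averaging
identity force `everReach P i = 1` on `R`, so from every tail in `R` the chain can enter `i`, and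
then, since `i → j`, enter `j`. Let `s₀ ∈ R` minimise `everReach P j` on `R`; the minimum is
`< 1` because `R` contains tails beginning with `j`, which is fully transient. By the minimum
principle for the averaging identity, the chain started at `s₀` never enters `j`: a
contradiction.
-/

namespace Finset

variable {ι : Type*} {s : Finset ι} {w x : ι → ℝ} {m : ℝ}

theorem eq_of_sum_mul_eq_of_le (hw : ∀ k ∈ s, 0 ≤ w k) (hw1 : ∑ k ∈ s, w k = 1)
    (hx : ∀ k ∈ s, 0 < w k → x k ≤ m) (h : ∑ k ∈ s, w k * x k = m) :
    ∀ k ∈ s, 0 < w k → x k = m := by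
  have hterm : ∀ k ∈ s, 0 ≤ w k * (m - x k) := fun k hk => by
    rcases (hw k hk).eq_or_lt with hk0 | hk0
    · simp [← hk0]
    · exact mul_nonneg hk0.le (sub_nonneg.2 (hx k hk hk0))
  have hsum : ∑ k ∈ s, w k * (m - x k) = 0 := by
    simp only [mul_sub, sum_sub_distrib, ← sum_mul, hw1, h, one_mul, sub_self]
  intro k hk hk0
  have := (sum_eq_zero_iff_of_nonneg hterm).1 hsum k hk
  exact (sub_eq_zero.1 ((mul_eq_zero.1 this).resolve_left hk0.ne')).symm

theorem eq_of_sum_mul_eq_of_ge (hw : ∀ k ∈ s, 0 ≤ w k) (hw1 : ∑ k ∈ s, w k = 1)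
    (hx : ∀ k ∈ s, 0 < w k → m ≤ x k) (h : ∑ k ∈ s, w k * x k = m) :
    ∀ k ∈ s, 0 < w k → x k = m := by
  have := eq_of_sum_mul_eq_of_le (x := fun k => -x k) (m := -m) hw hw1
    (fun k hk hk0 => neg_le_neg (hx k hk hk0)) (by simp [sum_neg_distrib, h])
  exact fun k hk hk0 => neg_inj.1 (this k hk hk0)

end Finset

namespace StochasticTensor

variable {n r : ℕ} {P : HOTensor n r}

def shift (j : Fin n) (s : Fin (r + 1) → Fin n) : Fin (r + 1) → Fin n :=
  Fin.cons j (Fin.init s)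

def TailStep (P : HOTensor n r) (s t : Fin (r + 1) → Fin n) : Prop :=
  ∃ j, 0 < P j s ∧ t = shift j s

abbrev TailReach (P : HOTensor n r) := Relation.ReflTransGen (TailStep P)

def firstPassageStep (P : HOTensor n r) (i : Fin n) (f : (Fin (r + 1) → Fin n) → ℝ)
    (s : Fin (r + 1) → Fin n) : ℝ :=
  P i s + ∑ j ∈ univ.filter (· ≠ i), f (shift j s) * P j s

theorem firstPassageStep_eq_sum (i : Fin n) (f : (Fin (r + 1) → Fin n) → ℝ)
    (s : Fin (r + 1) → Fin n) :
    firstPassageStep P i f s = ∑ j, P j s * if j = i then 1 else f (shift j s) := by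
  simp only [firstPassageStep, mul_ite, mul_one, sum_ite, filter_eq', mem_univ, if_true,
    sum_singleton, mul_comm]

theorem firstPassageStep_le_one (hP : IsStochasticT P) (i : Fin n)
    {f : (Fin (r + 1) → Fin n) → ℝ} (hf : ∀ t, f t ≤ 1) (s : Fin (r + 1) → Fin n) :
    firstPassageStep P i f s ≤ 1 := by
  rw [firstPassageStep_eq_sum]
  calc _ ≤ ∑ j, P j s := sum_le_sum fun j _ =>
          mul_le_of_le_one_right (hP.1 j s).1 (by split_ifs; exacts [le_rfl, hf _])
    _ = 1 := hP.2 s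

theorem fpp_nonneg (hP : IsStochasticT P) (k : ℕ) (i : Fin n) (s : Fin (r + 1) → Fin n) :
    0 ≤ fpp P k i s := by
  induction k generalizing s with
  | zero => exact (hP.1 i s).1
  | succ k ih => exact sum_nonneg fun j _ => mul_nonneg (ih _) (hP.1 j s).1

theorem tpow_succ_apply (k : ℕ) (c : Fin n) (s : Fin (r + 1) → Fin n) :
    tpow P (k + 1) c s = ∑ j, tpow P k c (shift j s) * P j s :=
  rfl

theorem tpow_nonneg (hP : IsStochasticT P) (k : ℕ) (i : Fin n) (s : Fin (r + 1) → Fin n) :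
    0 ≤ tpow P k i s := by
  induction k generalizing s with
  | zero => simp only [tpow]; positivity
  | succ k ih =>
    rw [tpow_succ_apply]
    exact sum_nonneg fun j _ => mul_nonneg (ih _) (hP.1 j s).1

theorem sum_range_succ_fpp (K : ℕ) (i : Fin n) (s : Fin (r + 1) → Fin n) :
    ∑ k ∈ range (K + 1), fpp P k i s =
      firstPassageStep P i (fun t => ∑ k ∈ range K, fpp P k i t) s := by
  rw [sum_range_succ', add_comm]
  simp only [fpp, firstPassageStep, shift, sum_mul]
  rw [sum_comm]

theorem sum_range_fpp_le_one (hP : IsStochasticT P) (K : ℕ) (i : Fin n)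
    (s : Fin (r + 1) → Fin n) : ∑ k ∈ range K, fpp P k i s ≤ 1 := by
  induction K generalizing s with
  | zero => simp
  | succ K ih => exact (sum_range_succ_fpp K i s).trans_le (firstPassageStep_le_one hP i ih s)

theorem summable_fpp (hP : IsStochasticT P) (i : Fin n) (s : Fin (r + 1) → Fin n) :
    Summable fun k => fpp P k i s :=
  summable_of_sum_range_le (fun k => fpp_nonneg hP k i s) (sum_range_fpp_le_one hP · i s)

theorem everReach_le_one (hP : IsStochasticT P) (i : Fin n) (s : Fin (r + 1) → Fin n) :
    everReach P i s ≤ 1 :=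
  (summable_fpp hP i s).tsum_le_of_sum_range_le (sum_range_fpp_le_one hP · i s)

theorem everReach_eq_firstPassageStep (hP : IsStochasticT P) (i : Fin n)
    (s : Fin (r + 1) → Fin n) :
    everReach P i s = firstPassageStep P i (everReach P i) s := by
  rw [everReach, (summable_fpp hP i s).tsum_eq_zero_add, firstPassageStep]
  congr 1
  simp only [fpp]
  rw [Summable.tsum_finsetSum fun j _ => (summable_fpp hP i _).mul_right _]
  exact sum_congr rfl fun j _ => tsum_mul_right

theorem everReach_eq_sum (hP : IsStochasticT P) (i : Fin n) (s : Fin (r + 1) → Fin n) :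
    everReach P i s = ∑ j, P j s * if j = i then 1 else everReach P i (shift j s) := by
  rw [everReach_eq_firstPassageStep hP, firstPassageStep_eq_sum]

theorem everReach_eq_one_of_tailStep (hP : IsStochasticT P) {i : Fin n}
    (hi : RecurrentState P i) {s t : Fin (r + 1) → Fin n} (hs : everReach P i s = 1)
    (hst : TailStep P s t) : everReach P i t = 1 := by
  obtain ⟨j, hj, rfl⟩ := hst
  have hx := eq_of_sum_mul_eq_of_le (fun j _ => (hP.1 j s).1) (hP.2 s)
    (fun j _ _ => by split_ifs; exacts [le_rfl, everReach_le_one hP i _])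
    ((everReach_eq_sum hP i s).symm.trans hs) j (mem_univ j) hj
  by_cases hji : j = i
  · subst hji
    exact hi (Fin.init s)
  · simpa [hji] using hx

theorem everReach_eq_one_of_tailReach (hP : IsStochasticT P) {i : Fin n}
    (hi : RecurrentState P i) {s t : Fin (r + 1) → Fin n} (hs : everReach P i s = 1)
    (hst : TailReach P s t) : everReach P i t = 1 := by
  induction hst with
  | refl => exact hs
  | tail _ hstep ih => exact everReach_eq_one_of_tailStep hP hi ih hstep

theorem everReach_min_step (hP : IsStochasticT P) {j : Fin n} {s : Fin (r + 1) → Fin n}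
    {m : ℝ} (hm : m < 1) (hs : everReach P j s = m)
    (hsucc : ∀ t, TailStep P s t → m ≤ everReach P j t) :
    P j s = 0 ∧ ∀ t, TailStep P s t → everReach P j t = m := by
  have hx := eq_of_sum_mul_eq_of_ge (fun j _ => (hP.1 j s).1) (hP.2 s)
    (fun k _ hk => by split_ifs; exacts [hm.le, hsucc _ ⟨k, hk, rfl⟩])
    ((everReach_eq_sum hP j s).symm.trans hs)
  have hPj : P j s = 0 := by
    by_contra hj
    have := hx j (mem_univ j) (lt_of_le_of_ne (hP.1 j s).1 (Ne.symm hj))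
    exact hm.ne' (by simpa using this)
  refine ⟨hPj, fun t ⟨k, hk, hkt⟩ => ?_⟩
  have hkj : k ≠ j := by rintro rfl; exact hk.ne' hPj
  simpa [hkt, hkj] using hx k (mem_univ k) hk

theorem eq_zero_of_tailReach_of_everReach_min (hP : IsStochasticT P) {j : Fin n}
    {a s₀ : Fin (r + 1) → Fin n} (hs₀ : TailReach P a s₀)
    (hmin : ∀ t, TailReach P a t → everReach P j s₀ ≤ everReach P j t)
    (hlt : everReach P j s₀ < 1) {t : Fin (r + 1) → Fin n} (ht : TailReach P s₀ t) :
    P j t = 0 := by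
  have hsucc : ∀ u, TailReach P s₀ u → ∀ v, TailStep P u v →
      everReach P j s₀ ≤ everReach P j v :=
    fun u hu v huv => hmin v ((hs₀.trans hu).tail huv)
  have hval : ∀ u, TailReach P s₀ u → everReach P j u = everReach P j s₀ := by
    intro u hu
    induction hu with
    | refl => rfl
    | @tail u v hu huv ih => exact (everReach_min_step hP hlt ih (hsucc u hu)).2 v huv
  exact (everReach_min_step hP hlt (hval t ht) (hsucc t ht)).1

theorem exists_tailStep_of_sum_pos (hP : IsStochasticT P) {A : Finset (Fin n)}
    {f : (Fin (r + 1) → Fin n) → ℝ} (hf : ∀ t, 0 ≤ f t) {s : Fin (r + 1) → Fin n}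
    (h : 0 < ∑ j ∈ A, f (shift j s) * P j s) : ∃ t, TailStep P s t ∧ 0 < f t := by
  obtain ⟨j, -, hj⟩ := exists_lt_of_sum_lt (by simpa using h : ∑ _j ∈ A, (0 : ℝ) < _)
  exact ⟨shift j s, ⟨j, pos_of_mul_pos_right hj (hf _), rfl⟩,
    pos_of_mul_pos_left hj (hP.1 j s).1⟩

theorem exists_tailReach_of_tpow_pos (hP : IsStochasticT P) {c : Fin n} (k : ℕ)
    {s : Fin (r + 1) → Fin n} (h : 0 < tpow P (k + 1) c s) :
    ∃ t, TailReach P s t ∧ 0 < P c t := by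
  induction k generalizing s with
  | zero =>
    obtain ⟨-, ⟨j, hj, rfl⟩, ht⟩ := exists_tailStep_of_sum_pos hP (tpow_nonneg hP 0 c)
      (tpow_succ_apply (P := P) 0 c s ▸ h)
    obtain rfl : c = j := by
      by_contra hcj
      simp [tpow, shift, hcj] at ht
    exact ⟨s, .refl, hj⟩
  | succ k ih =>
    obtain ⟨t, hst, ht⟩ := exists_tailStep_of_sum_pos hP (tpow_nonneg hP (k + 1) c)
      (tpow_succ_apply (P := P) (k + 1) c s ▸ h)
    obtain ⟨u, htu, hu⟩ := ih ht
    exact ⟨u, .head hst htu, hu⟩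

theorem exists_tailReach_of_fpp_pos (hP : IsStochasticT P) {i : Fin n} (k : ℕ)
    {s : Fin (r + 1) → Fin n} (h : 0 < fpp P k i s) :
    ∃ t, TailReach P s t ∧ 0 < P i t := by
  induction k generalizing s with
  | zero => exact ⟨s, .refl, h⟩
  | succ k ih =>
    obtain ⟨t, hst, ht⟩ := exists_tailStep_of_sum_pos hP (fpp_nonneg hP k i) h
    obtain ⟨u, htu, hu⟩ := ih ht
    exact ⟨u, .head hst htu, hu⟩

theorem exists_tailReach_of_everReach_pos (hP : IsStochasticT P) {i : Fin n}
    {s : Fin (r + 1) → Fin n} (h : 0 < everReach P i s) :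
    ∃ t, TailReach P s t ∧ 0 < P i t := by
  obtain ⟨k, hk⟩ : ∃ k, 0 < fpp P k i s := by
    by_contra! hk
    exact h.not_ge (tsum_nonpos hk)
  exact exists_tailReach_of_fpp_pos hP k hk

theorem Reach.exists_tailReach (hP : IsStochasticT P) {i j : Fin n} (hij : Reach P i j)
    (hne : i ≠ j) (u : Fin r → Fin n) : ∃ t, TailReach P (Fin.cons i u) t ∧ 0 < P j t := by
  obtain ⟨_ | k, hk⟩ := hij u
  · simp [tpow, hne.symm] at hk
  · exact exists_tailReach_of_tpow_pos hP k hk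

end StochasticTensor

open StochasticTensor

theorem no_comm_recurrent_fullyTransient_general (n r : ℕ)
    (P : HOTensor n r) (hP : IsStochasticT P) :
    ¬ ∃ i j : Fin n, Comm P i j ∧ RecurrentState P i ∧ FullyTransientState P j := by
  rintro ⟨i, j, ⟨hij, -⟩, hi, hj⟩
  obtain rfl | hne := eq_or_ne i j
  · exact (hj fun _ => i).ne (hi fun _ => i)
  let a : Fin (r + 1) → Fin n := Fin.cons i fun _ => i
  obtain ⟨s₀, hs₀, hmin⟩ :=
    Set.exists_min_image {t | TailReach P a t} (everReach P j) (Set.toFinite _) ⟨a, .refl⟩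
  obtain ⟨t, hs₀t, hit⟩ := exists_tailReach_of_everReach_pos hP
    ((everReach_eq_one_of_tailReach hP hi (hi _) hs₀).symm ▸ one_pos)
  obtain ⟨t', htt', hjt'⟩ := hij.exists_tailReach hP hne (Fin.init t)
  have hs₀t' : TailReach P s₀ t' := (hs₀t.tail ⟨i, hit, rfl⟩).trans htt'
  have hlt : everReach P j s₀ < 1 :=
    (hmin _ ((hs₀.trans hs₀t').tail ⟨j, hjt', rfl⟩)).trans_lt (hj (Fin.init t'))
  exact hjt'.ne' (eq_zero_of_tailReach_of_everReach_min hP hs₀ hmin hlt hs₀t')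

/-- no two communicating states can be respectively recurrent and
fully transient (here the order is `m - 1` with `m = r + 2 ≥ 3`). -/
theorem no_comm_recurrent_fullyTransient (n r : ℕ) (hn : 2 ≤ n) (hr : 1 ≤ r)
    (P : HOTensor n r) (hP : IsStochasticT P) :
    ¬ ∃ i j : Fin n, Comm P i j ∧ RecurrentState P i ∧ FullyTransientState P j :=
  no_comm_recurrent_fullyTransient_general n r P hP
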